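/- For all integers n ≥ 0 and k ≥ 1, the number of ascent sequences of length n all of whose runs have length at most k equals the number of permutations in R_n^(k), i.e., |A_n^(k)| = |R_n^(k)|. -/

import Mathlib

/-- Number of ascents in an integer sequence. -/
def ascList (l : List ℕ) : ℕ :=
  (List.range (l.length - 1)).countP (fun j => decide (l.getD j 0 < l.getD (j + 1) 0))

/-- Ascent sequence predicate. -/
def IsAscentSeq (l : List ℕ) : Prop :=
  l.getD 0 0 = 0 ∧ ∀ i, 0 < i → i < l.length → l.getD i 0 ≤ 1 + ascList (l.take i)

/-- Number of equal adjacent pairs. -/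
def adjpairs (l : List ℕ) : ℕ :=
  (List.range (l.length - 1)).countP (fun j => decide (l.getD j 0 = l.getD (j + 1) 0))

/-- All runs of equal consecutive letters have length at most `k`
(no `k+1` consecutive equal entries). -/
def RunsAtMost (k : ℕ) (l : List ℕ) : Prop :=
  ¬ ∃ i, i + k < l.length ∧ ∀ j ≤ k, l.getD (i + j) 0 = l.getD i 0

/-- Order-isomorphism of two partial orders on `Fin n`. -/
def PosetIso {n : ℕ} (P Q : PartialOrder (Fin n)) : Prop :=
  ∃ e : Fin n ≃ Fin n, ∀ a b, P.le a b ↔ Q.le (e a) (e b)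

/-- The setoid of partial orders on `Fin n` satisfying `Φ`, up to isomorphism. -/
def posetSetoid (n : ℕ) (Φ : PartialOrder (Fin n) → Prop) :
    Setoid {P : PartialOrder (Fin n) // Φ P} where
  r P Q := PosetIso P.1 Q.1
  iseqv := by
    constructor
    · intro P
      exact ⟨Equiv.refl _, fun a b => Iff.rfl⟩
    · rintro P Q ⟨e, he⟩
      refine ⟨e.symm, fun a b => ?_⟩
      simp only [he (e.symm a) (e.symm b), Equiv.apply_symm_apply]
    · rintro P Q R ⟨e, he⟩ ⟨f, hf⟩
      exact ⟨e.trans f, fun a b => (he a b).trans (hf (e a) (e b))⟩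

/-- The number of isomorphism classes of partial orders on `n` elements satisfying `Φ`. -/
noncomputable def posetCount (n : ℕ) (Φ : PartialOrder (Fin n) → Prop) : ℕ :=
  Nat.card (Quotient (posetSetoid n Φ))

/-- A poset is (2+2)-free. -/
def TwoTwoFree {n : ℕ} (P : PartialOrder (Fin n)) : Prop :=
  ¬ ∃ a b c d : Fin n, P.lt a b ∧ P.lt c d ∧
    ¬ P.le a c ∧ ¬ P.le c a ∧ ¬ P.le a d ∧ ¬ P.le d a ∧
    ¬ P.le b c ∧ ¬ P.le c b ∧ ¬ P.le b d ∧ ¬ P.le d b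

/-- Two elements are indistinguishable: same strict down-set and same strict up-set. -/
def Indist {n : ℕ} (P : PartialOrder (Fin n)) (x y : Fin n) : Prop :=
  (∀ z, P.lt z x ↔ P.lt z y) ∧ (∀ z, P.lt x z ↔ P.lt y z)

/-- Indistinguishability as a setoid. -/
def indistSetoid {n : ℕ} (P : PartialOrder (Fin n)) : Setoid (Fin n) where
  r := Indist P
  iseqv := ⟨fun _ => ⟨fun _ => Iff.rfl, fun _ => Iff.rfl⟩,
    fun h => ⟨fun z => (h.1 z).symm, fun z => (h.2 z).symm⟩,
    fun h h' => ⟨fun z => (h.1 z).trans (h'.1 z), fun z => (h.2 z).trans (h'.2 z)⟩⟩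

/-- Size of the indistinguishability class of `x`. -/
noncomputable def classSize {n : ℕ} (P : PartialOrder (Fin n)) (x : Fin n) : ℕ :=
  Nat.card {y : Fin n // Indist P x y}

/-- `maxindist(P) ≤ k`: each indistinguishability class has size at most `k`. -/
def MaxindistLe {n : ℕ} (P : PartialOrder (Fin n)) (k : ℕ) : Prop :=
  ∀ x : Fin n, classSize P x ≤ k

/-- No two distinct elements are indistinguishable. -/
def PrimitivePoset {n : ℕ} (P : PartialOrder (Fin n)) : Prop :=
  ∀ x y : Fin n, Indist P x y → x = y

/-- `rep(P)`: the minimum number of elements whose removal leaves an induced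
subposet with no pair of distinct indistinguishable elements. -/
noncomputable def repStat {n : ℕ} (P : PartialOrder (Fin n)) : ℕ :=
  sInf {m | ∃ S : Finset (Fin n), S.card = m ∧
    ∀ x ∉ S, ∀ y ∉ S, Indist P x y → x = y}

/-- The strict down-set of `x`. -/
def downSet {n : ℕ} (P : PartialOrder (Fin n)) (x : Fin n) : Set (Fin n) :=
  {z | P.lt z x}

/-- The level of `x`: the number of strict down-sets strictly contained in `D(x)`. -/
noncomputable def levelOf {n : ℕ} (P : PartialOrder (Fin n)) (x : Fin n) : ℕ :=
  {S : Set (Fin n) | (∃ z, S = downSet P z) ∧ S ⊂ downSet P x}.ncard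

/-- `levels(P)`: index of the highest level. -/
noncomputable def levelsStat {n : ℕ} (P : PartialOrder (Fin n)) : ℕ :=
  {S : Set (Fin n) | ∃ z, S = downSet P z}.ncard - 1

/-- `x` is a maximal element. -/
def IsMaximal {n : ℕ} (P : PartialOrder (Fin n)) (x : Fin n) : Prop :=
  ∀ z, ¬ P.lt x z

/-- `minmax(P)`: the minimum level of a maximal element. -/
noncomputable def minmaxStat {n : ℕ} (P : PartialOrder (Fin n)) : ℕ :=
  sInf {j | ∃ x, IsMaximal P x ∧ levelOf P x = j}

/-- Membership in `M_n`: upper triangular, no zero row or column, entries sum to `n`. -/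
def InMatM (n : ℕ) (A : Σ d : ℕ, Matrix (Fin d) (Fin d) ℕ) : Prop :=
  (∀ i j : Fin A.1, (j : ℕ) < (i : ℕ) → A.2 i j = 0) ∧
  (∀ i : Fin A.1, ∃ j, A.2 i j ≠ 0) ∧
  (∀ j : Fin A.1, ∃ i, A.2 i j ≠ 0) ∧
  (∑ i, ∑ j, A.2 i j) = n

/-- All entries are at most `k`. -/
def EntriesLe (k : ℕ) (A : Σ d : ℕ, Matrix (Fin d) (Fin d) ℕ) : Prop :=
  ∀ i j, A.2 i j ≤ k

/-- `index(A) - 1`: the least (0-based) row index with a nonzero entry in the last column. -/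
noncomputable def matIndex0 (A : Σ d : ℕ, Matrix (Fin d) (Fin d) ℕ) : ℕ :=
  sInf {i : ℕ | ∃ (h : i < A.1) (h' : A.1 - 1 < A.1), A.2 ⟨i, h⟩ ⟨A.1 - 1, h'⟩ ≠ 0}

/-- The number of nonzero entries of `A`. -/
noncomputable def matNZ (A : Σ d : ℕ, Matrix (Fin d) (Fin d) ℕ) : ℕ :=
  Nat.card {p : Fin A.1 × Fin A.1 // A.2 p.1 p.2 ≠ 0}

/-- Membership in `R_n`. -/
def InRset {n : ℕ} (π : Equiv.Perm (Fin n)) : Prop :=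
  ¬ ∃ i j k : Fin n, (j : ℕ) = (i : ℕ) + 1 ∧ (i : ℕ) + 1 < (k : ℕ) ∧
    (π k : ℕ) < (π i : ℕ) ∧ (π i : ℕ) < (π j : ℕ) ∧ (π i : ℕ) = (π k : ℕ) + 1

/-- No `k+1` consecutive letters, each one less than the previous. -/
def NoDescRun {n : ℕ} (k : ℕ) (π : Equiv.Perm (Fin n)) : Prop :=
  ¬ ∃ (i : ℕ) (h : i + k < n), ∀ j, ∀ hj : j ≤ k,
    (π ⟨i + j, by omega⟩ : ℕ) = (π ⟨i, by omega⟩ : ℕ) - j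

/-- The number of descents by one: indices `i` with `π_i = π_{i+1} + 1`. -/
noncomputable def adjdes {n : ℕ} (π : Equiv.Perm (Fin n)) : ℕ :=
  Nat.card {i : ℕ // ∃ h : i + 1 < n,
    (π ⟨i, Nat.lt_of_succ_lt h⟩ : ℕ) = (π ⟨i + 1, h⟩ : ℕ) + 1}

/-- A perfect matching, encoded as a fixed-point-free involution. -/
def IsMatching {m : ℕ} (f : Equiv.Perm (Fin m)) : Prop :=
  (∀ x, f (f x) = x) ∧ ∀ x, f x ≠ x

/-- The Stoimenow condition on a matching. -/
def IsStoimenow {m : ℕ} (f : Equiv.Perm (Fin m)) : Prop :=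
  ¬ ∃ a c : Fin m, a < f a ∧ c < f c ∧
    (((a : ℕ) = (c : ℕ) + 1 ∧ f a < f c) ∨ ((a : ℕ) < (c : ℕ) ∧ (f a : ℕ) = (f c : ℕ) + 1))

/-- There are `i, j` such that `{i+l, j+l}` is an arc for every `l = 0, …, k`. -/
def HasSimRun {m : ℕ} (k : ℕ) (f : Equiv.Perm (Fin m)) : Prop :=
  ∃ i j : ℕ, ∀ l ≤ k, ∃ (h1 : i + l < m) (h2 : j + l < m), f ⟨i + l, h1⟩ = ⟨j + l, h2⟩

/-- After removing the arcs with endpoints in `A`, no pair of similar arcs remains. -/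
def SimilarFree {m : ℕ} (f : Equiv.Perm (Fin m)) (A : Finset (Fin m)) : Prop :=
  ¬ ∃ (i j : ℕ) (h1 : i < m) (h2 : j < m) (h3 : i + 1 < m) (h4 : j + 1 < m),
    f ⟨i, h1⟩ = ⟨j, h2⟩ ∧ f ⟨i + 1, h3⟩ = ⟨j + 1, h4⟩ ∧
    (⟨i, h1⟩ : Fin m) ∉ A ∧ (⟨i + 1, h3⟩ : Fin m) ∉ A ∧
    (⟨j, h2⟩ : Fin m) ∉ A ∧ (⟨j + 1, h4⟩ : Fin m) ∉ A

/-- `echords(M)`: minimum number of arcs whose removal leaves no similar pair. -/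
noncomputable def echords {m : ℕ} (f : Equiv.Perm (Fin m)) : ℕ :=
  sInf {c | ∃ A : Finset (Fin m), (∀ x ∈ A, f x ∈ A) ∧ A.card = 2 * c ∧ SimilarFree f A}

/-!
Permutations are built by inserting maxima. Reading an ascent sequence `x` from left to right,
the `i`-th letter `v` inserts the new maximum `i` at the `v`-th *active* site of the word built so
far, a site being active when inserting a maximum there does not create the pattern of `R_n`.
Each insertion at an active site stays in `R_n`, the old sites keep their status, and the new site
right after `i` is blocked exactly when `i - 1` lies further right. Since `i - 1` sits at the
active site numbered by the previous letter, this happens exactly when `v` is not an ascent, so the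
number of active sites stays `asc(x) + 2`, the number of admissible next letters. Removing the
maximum inverts the construction. Finally `a - 1` directly follows `a` in the permutation exactly
when `x[a] = x[a-1]`, so runs of `k + 1` equal letters correspond to `k + 1` consecutive letters
each one less than the previous.
-/

namespace List

variable {α : Type*}

theorem getD_insertIdx {l : List α} {s : ℕ} (hs : s ≤ l.length) (a d : α) (i : ℕ) :
    (l.insertIdx s a).getD i d =
      if i < s then l.getD i d else if i = s then a else l.getD (i - 1) d := by
  simp only [getD_eq_getElem?_getD, getElem?_insertIdx]
  split_ifs <;> simp_all

theorem getD_append_singleton (l : List α) (a d : α) (i : ℕ) :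
    (l ++ [a]).getD i d = if i < l.length then l.getD i d else if i = l.length then a else d := by
  split_ifs with h1 h2
  · exact getD_append _ _ _ _ h1
  · simp [h2]
  · rw [getD_eq_default]
    simp only [length_append, length_singleton]
    omega

theorem getD_mem_of_lt {l : List α} {i : ℕ} (d : α) (h : i < l.length) : l.getD i d ∈ l := by
  rw [getD_eq_getElem _ _ h]
  exact getElem_mem h

theorem Nodup.insertIdx {l : List α} {s : ℕ} {a : α} (hs : s ≤ l.length) (hl : l.Nodup)
    (ha : a ∉ l) : (l.insertIdx s a).Nodup :=
  (perm_insertIdx a l hs).nodup_iff.2 (nodup_cons.2 ⟨ha, hl⟩)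

variable [BEq α] [LawfulBEq α]

theorem Nodup.idxOf_getD {l : List α} (hl : l.Nodup) {i : ℕ} (h : i < l.length) (d : α) :
    l.idxOf (l.getD i d) = i := by
  rw [getD_eq_getElem _ _ h, hl.idxOf_getElem]

theorem getD_idxOf {l : List α} {a : α} (h : a ∈ l) (d : α) : l.getD (l.idxOf a) d = a := by
  rw [getD_eq_getElem _ _ (idxOf_lt_length_iff.2 h), getElem_idxOf]

theorem idxOf_insertIdx_self {l : List α} {s : ℕ} {a : α} (hs : s ≤ l.length) (hl : l.Nodup)
    (ha : a ∉ l) : (l.insertIdx s a).idxOf a = s := by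
  have := (hl.insertIdx hs ha).idxOf_getD (i := s)
    (by rw [length_insertIdx_of_le_length hs]; omega) a
  rwa [getD_insertIdx hs, if_neg (lt_irrefl s), if_pos rfl] at this

theorem idxOf_insertIdx_of_mem {l : List α} {s : ℕ} {a b : α} (hs : s ≤ l.length)
    (hl : l.Nodup) (ha : a ∉ l) (hb : b ∈ l) :
    (l.insertIdx s a).idxOf b = if l.idxOf b < s then l.idxOf b else l.idxOf b + 1 := by
  have hnd := hl.insertIdx hs ha
  have hlt := idxOf_lt_length_iff.2 hb
  have hab : b ≠ a := fun h => ha (h ▸ hb)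
  have hlen := length_insertIdx_of_le_length hs a
  split_ifs with h
  · have := hnd.idxOf_getD (i := l.idxOf b) (by omega) a
    rwa [getD_insertIdx hs, if_pos h, getD_idxOf hb] at this
  · have := hnd.idxOf_getD (i := l.idxOf b + 1) (by omega) a
    rwa [getD_insertIdx hs, if_neg (by omega), if_neg (by omega), Nat.add_sub_cancel,
      getD_idxOf hb] at this

theorem eq_of_insertIdx_eq {l l' : List α} {s s' : ℕ} {a : α} (hs : s ≤ l.length)
    (hs' : s' ≤ l'.length) (hl : l.Nodup) (hl' : l'.Nodup) (ha : a ∉ l) (ha' : a ∉ l')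
    (h : l.insertIdx s a = l'.insertIdx s' a) : s = s' ∧ l = l' := by
  obtain rfl : s = s' := by
    rw [← idxOf_insertIdx_self hs hl ha, h, idxOf_insertIdx_self hs' hl' ha']
  exact ⟨rfl, insertIdx_injective s a h⟩

end List

theorem ascList_append_singleton {x : List ℕ} (hx : x ≠ []) (v : ℕ) :
    ascList (x ++ [v]) = ascList x + if x.getD (x.length - 1) 0 < v then 1 else 0 := by
  have hL : 1 ≤ x.length := List.length_pos_iff.2 hx
  have hrange :
      List.range ((x ++ [v]).length - 1) = List.range (x.length - 1) ++ [x.length - 1] := by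
    rw [← List.range_succ]
    congr 1
    simp only [List.length_append, List.length_singleton]
    omega
  rw [ascList, ascList, hrange, List.countP_append]
  congr 1
  · refine List.countP_congr fun j hj => ?_
    rw [List.mem_range] at hj
    rw [List.getD_append_singleton, List.getD_append_singleton, if_pos (by omega),
      if_pos (by omega)]
  · have e1 : (x ++ [v]).getD (x.length - 1) 0 = x.getD (x.length - 1) 0 :=
      List.getD_append _ _ _ _ (by omega)
    have e2 : (x ++ [v]).getD (x.length - 1 + 1) 0 = v := by
      rw [List.getD_append_singleton, if_neg (by omega), if_pos (by omega)]
    simp only [List.countP_singleton, e1, e2, decide_eq_true_eq]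

theorem isAscentSeq_append_singleton {x : List ℕ} (hx : x ≠ []) (v : ℕ) :
    IsAscentSeq (x ++ [v]) ↔ IsAscentSeq x ∧ v ≤ 1 + ascList x := by
  have hL : 1 ≤ x.length := List.length_pos_iff.2 hx
  simp only [IsAscentSeq, List.getD_append_singleton, List.length_append, List.length_singleton]
  constructor
  · rintro ⟨h0, h1⟩
    refine ⟨⟨by rwa [if_pos (by omega)] at h0, fun i hi hi2 => ?_⟩, ?_⟩
    · have := h1 i hi (by omega)
      rwa [if_pos hi2, List.take_append_of_le_length hi2.le] at this
    · have := h1 x.length (by omega) (by omega)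
      rwa [if_neg (lt_irrefl _), if_pos rfl, List.take_left] at this
  · rintro ⟨⟨h0, h1⟩, h2⟩
    refine ⟨by rwa [if_pos (by omega)], fun i hi hi2 => ?_⟩
    rcases Nat.lt_or_ge i x.length with h | h
    · rw [if_pos h, List.take_append_of_le_length h.le]
      exact h1 i hi h
    · obtain rfl : i = x.length := by omega
      rw [if_neg (lt_irrefl _), if_pos rfl, List.take_left]
      exact h2

namespace AscentBij

open List

theorem mem_of_perm_range {p : List ℕ} {n a : ℕ} (hp : p ~ range n) : a ∈ p ↔ a < n := by
  rw [hp.mem_iff, mem_range]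

theorem insertIdx_perm_range {p : List ℕ} {s m : ℕ} (hp : p ~ range m) (hs : s ≤ p.length) :
    p.insertIdx s m ~ range (m + 1) :=
  (perm_insertIdx m p hs).trans <| (hp.cons m).trans <| by
    rw [range_succ]; exact (perm_append_singleton m _).symm

theorem perm_range_of_insertIdx {p : List ℕ} {s m : ℕ} (hs : s ≤ p.length)
    (h : p.insertIdx s m ~ range (m + 1)) : p ~ range m := by
  have := (perm_insertIdx m p hs).symm.trans h
  rw [range_succ] at this
  exact (this.trans (perm_append_singleton m _)).cons_inv

theorem exists_insertIdx_eq_of_perm_range_succ {p : List ℕ} {n : ℕ} (hp : p ~ range (n + 1)) :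
    ∃ q s, s ≤ q.length ∧ q ~ range n ∧ p = q.insertIdx s n := by
  have hn : n ∈ p := (mem_of_perm_range hp).2 (Nat.lt_succ_self n)
  have hlt := idxOf_lt_length_iff.2 hn
  have hs : p.idxOf n ≤ (p.eraseIdx (p.idxOf n)).length := by
    rw [length_eraseIdx_of_lt hlt]
    omega
  have hp' : p = (p.eraseIdx (p.idxOf n)).insertIdx (p.idxOf n) n := by
    have := (insertIdx_eraseIdx_getElem hlt).symm
    rwa [getElem_idxOf hlt] at this
  exact ⟨_, _, hs, perm_range_of_insertIdx hs (hp' ▸ hp), hp'⟩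

/-- An occurrence, in the word `p`, of the pattern defining `R_n`. -/
def HasRPattern (p : List ℕ) : Prop :=
  ∃ i k, k < p.length ∧ i + 1 < k ∧
    p.getD k 0 + 1 = p.getD i 0 ∧ p.getD i 0 < p.getD (i + 1) 0

/-- Inserting a new maximum at site `s` (just before `p[s]`) creates the pattern, with `p[s-1]`
and a later letter `p[s-1] - 1`. -/
def Blocked (p : List ℕ) (s : ℕ) : Prop :=
  ∃ t < p.length, s ≤ t ∧ 1 ≤ s ∧ p.getD t 0 + 1 = p.getD (s - 1) 0

instance (p : List ℕ) (s : ℕ) : Decidable (Blocked p s) :=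
  inferInstanceAs (Decidable (∃ t < p.length, _ ∧ _ ∧ _))

def Active (p : List ℕ) (s : ℕ) : Prop := ¬ Blocked p s

instance (p : List ℕ) : DecidablePred (Active p) := fun _ => inferInstanceAs (Decidable ¬ _)

theorem active_of_length_lt {p : List ℕ} {s : ℕ} (h : p.length < s) : Active p s :=
  fun ⟨_, ht, hst, _⟩ => by omega

theorem infinite_setOf_active (p : List ℕ) : {s | Active p s}.Infinite :=
  Set.infinite_of_forall_exists_gt fun a =>
    ⟨a + p.length + 1, active_of_length_lt (by omega), by omega⟩

/-- The sites `0, …, p.length` contain all blocked ones, so this is the number of active sites. -/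
def numActive (p : List ℕ) : ℕ := Nat.count (Active p) (p.length + 1)

section Insertion

variable {p : List ℕ} {s m : ℕ}

theorem HasRPattern.insertIdx (hs : s ≤ p.length) (hb : ∀ b ∈ p, b < m) (h : HasRPattern p) :
    HasRPattern (p.insertIdx s m) := by
  obtain ⟨i, k, hk, hik, hki, hii⟩ := h
  have hlen := length_insertIdx_of_le_length hs m
  have hi : p.getD i 0 < m := hb _ (getD_mem_of_lt 0 (by omega))
  have witness : ∀ i' k', i' + 1 < k' → k' < p.length + 1 →
      (p.insertIdx s m).getD k' 0 = p.getD k 0 → (p.insertIdx s m).getD i' 0 = p.getD i 0 →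
      p.getD i 0 < (p.insertIdx s m).getD (i' + 1) 0 → HasRPattern (p.insertIdx s m) :=
    fun i' k' h1 h2 h3 h4 h5 => ⟨i', k', by omega, h1, by omega, by omega⟩
  rcases lt_or_ge i s with h1 | h1
  · rcases lt_or_ge k s with h2 | h2
    · refine witness i k hik (by omega) ?_ ?_ ?_ <;> simp only [getD_insertIdx hs] <;>
        split_ifs <;> omega
    · refine witness i (k + 1) (by omega) (by omega) ?_ ?_ ?_ <;>
        simp only [getD_insertIdx hs, Nat.add_sub_cancel] <;> split_ifs <;> omega
  · refine witness (i + 1) (k + 1) (by omega) (by omega) ?_ ?_ ?_ <;>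
      simp only [getD_insertIdx hs, Nat.add_sub_cancel] <;> split_ifs <;> omega

theorem getD_le_of_forall_lt (hb : ∀ b ∈ p, b < m) (i : ℕ) : p.getD i 0 ≤ m := by
  rcases lt_or_ge i p.length with h | h
  · exact (hb _ (getD_mem_of_lt 0 h)).le
  · rw [getD_eq_default _ _ h]
    exact Nat.zero_le m

theorem Blocked.hasRPattern_insertIdx (hs : s ≤ p.length) (hb : ∀ b ∈ p, b < m)
    (h : Blocked p s) : HasRPattern (p.insertIdx s m) := by
  obtain ⟨t, ht, hst, hs1, hval⟩ := h
  have hlt : p.getD (s - 1) 0 < m := hb _ (getD_mem_of_lt 0 (by omega))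
  refine ⟨s - 1, t + 1, ?_, by omega, ?_, ?_⟩
  · rw [length_insertIdx_of_le_length hs]
    omega
  all_goals simp only [getD_insertIdx hs, Nat.add_sub_cancel]; split_ifs <;> omega

theorem blocked_or_hasRPattern_of_insertIdx (hs : s ≤ p.length) (hb : ∀ b ∈ p, b < m)
    (h : HasRPattern (p.insertIdx s m)) : Blocked p s ∨ HasRPattern p := by
  obtain ⟨i, k, hk, hik, hki, hii⟩ := h
  rw [length_insertIdx_of_le_length hs] at hk
  simp only [getD_insertIdx hs, Nat.add_sub_cancel] at hki hii
  have hle := getD_le_of_forall_lt hb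
  have hlt : ∀ j < p.length, p.getD j 0 < m := fun j hj => hb _ (getD_mem_of_lt 0 hj)
  rcases lt_trichotomy (i + 1) s with h1 | h1 | h1
  · rcases lt_trichotomy k s with h2 | h2 | h2
    · exact .inr ⟨i, k, by omega, hik, by split_ifs at hki hii <;> omega,
        by split_ifs at hki hii <;> omega⟩
    · split_ifs at hki <;> have := hlt i (by omega) <;> omega
    · exact .inr ⟨i, k - 1, by omega, by omega, by split_ifs at hki hii <;> omega,
        by split_ifs at hki hii <;> omega⟩
  · subst h1
    refine .inl ⟨k - 1, by omega, by omega, by omega, ?_⟩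
    simp only [Nat.add_sub_cancel]
    split_ifs at hki <;> omega
  · rcases Nat.lt_or_ge s i with h2 | h2
    · exact .inr ⟨i - 1, k - 1, by omega, by omega, by split_ifs at hki hii <;> omega,
        by split_ifs at hki hii <;> simp only [show i - 1 + 1 = i by omega] <;> omega⟩
    · have := hle i
      split_ifs at hii <;> omega

theorem hasRPattern_insertIdx_iff (hs : s ≤ p.length) (hb : ∀ b ∈ p, b < m) :
    HasRPattern (p.insertIdx s m) ↔ Blocked p s ∨ HasRPattern p :=
  ⟨blocked_or_hasRPattern_of_insertIdx hs hb,
    fun h => h.elim (Blocked.hasRPattern_insertIdx hs hb) (HasRPattern.insertIdx hs hb)⟩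

variable {u : ℕ}

theorem blocked_insertIdx_of_le (hs : s ≤ p.length) (hb : ∀ b ∈ p, b < m) (hu : u ≤ s) :
    Blocked (p.insertIdx s m) u ↔ Blocked p u := by
  have hlen := length_insertIdx_of_le_length hs m
  constructor
  · rintro ⟨t, ht, hut, hu1, hval⟩
    have hlt : p.getD (u - 1) 0 < m := hb _ (getD_mem_of_lt 0 (by omega))
    simp only [getD_insertIdx hs] at hval
    rcases lt_trichotomy t s with h | rfl | h
    · exact ⟨t, by omega, hut, hu1, by split_ifs at hval <;> omega⟩
    · split_ifs at hval <;> omega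
    · exact ⟨t - 1, by omega, by omega, hu1, by split_ifs at hval <;> omega⟩
  · rintro ⟨t, ht, hut, hu1, hval⟩
    rcases lt_or_ge t s with h | h
    · refine ⟨t, by omega, hut, hu1, ?_⟩
      simp only [getD_insertIdx hs]
      split_ifs <;> omega
    · refine ⟨t + 1, by omega, by omega, hu1, ?_⟩
      simp only [getD_insertIdx hs, Nat.add_sub_cancel]
      split_ifs <;> omega

theorem blocked_insertIdx_of_ge (hs : s ≤ p.length) (hu : s + 2 ≤ u) :
    Blocked (p.insertIdx s m) u ↔ Blocked p (u - 1) := by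
  have hlen := length_insertIdx_of_le_length hs m
  constructor
  · rintro ⟨t, ht, hut, hu1, hval⟩
    refine ⟨t - 1, by omega, by omega, by omega, ?_⟩
    simp only [getD_insertIdx hs] at hval
    split_ifs at hval <;> omega
  · rintro ⟨t, ht, hut, hu1, hval⟩
    refine ⟨t + 1, by omega, by omega, by omega, ?_⟩
    simp only [getD_insertIdx hs, Nat.add_sub_cancel]
    split_ifs <;> omega

theorem blocked_insertIdx_succ (hs : s ≤ p.length) (hn : p.Nodup) (hm : m - 1 ∈ p)
    (hm1 : 1 ≤ m) : Blocked (p.insertIdx s m) (s + 1) ↔ s ≤ p.idxOf (m - 1) := by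
  have hlen := length_insertIdx_of_le_length hs m
  have hpos := idxOf_lt_length_iff.2 hm
  have hval := getD_idxOf hm 0
  constructor
  · rintro ⟨t, ht, hst, -, htv⟩
    simp only [getD_insertIdx hs, Nat.add_sub_cancel] at htv
    split_ifs at htv <;> try omega
    rw [← show p.getD (t - 1) 0 = m - 1 by omega, hn.idxOf_getD (by omega)]
    omega
  · intro h
    refine ⟨p.idxOf (m - 1) + 1, by omega, by omega, by omega, ?_⟩
    simp only [getD_insertIdx hs, Nat.add_sub_cancel]
    split_ifs <;> omega

theorem count_active_insertIdx_of_le (hs : s ≤ p.length) (hb : ∀ b ∈ p, b < m)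
    (hu : u ≤ s + 1) : Nat.count (Active (p.insertIdx s m)) u = Nat.count (Active p) u := by
  simp only [Nat.count_eq_card_filter_range]
  congr 1
  refine Finset.filter_congr fun w hw => not_congr (blocked_insertIdx_of_le hs hb ?_)
  rw [Finset.mem_range] at hw
  omega

theorem count_active_insertIdx_of_ge (hs : s ≤ p.length) (hn : p.Nodup) (hm : m - 1 ∈ p)
    (hm1 : 1 ≤ m) (hb : ∀ b ∈ p, b < m) (hu : s + 1 ≤ u) :
    Nat.count (Active (p.insertIdx s m)) (u + 1) =
      Nat.count (Active p) u + if s ≤ p.idxOf (m - 1) then 0 else 1 := by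
  induction u, hu using Nat.le_induction with
  | base =>
    rw [Nat.count_succ, count_active_insertIdx_of_le hs hb le_rfl]
    simp only [Active, blocked_insertIdx_succ hs hn hm hm1]
    split_ifs <;> rfl
  | succ u hu ih =>
    rw [Nat.count_succ, ih, Nat.count_succ]
    simp only [Active, blocked_insertIdx_of_ge hs (show s + 2 ≤ u + 1 by omega),
      Nat.add_sub_cancel]
    by_cases hB : Blocked p u <;> simp only [hB, not_true, not_false_iff, if_true, if_false] <;>
      omega

theorem numActive_insertIdx (hs : s ≤ p.length) (hn : p.Nodup) (hm : m - 1 ∈ p) (hm1 : 1 ≤ m)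
    (hb : ∀ b ∈ p, b < m) :
    numActive (p.insertIdx s m) = numActive p + if s ≤ p.idxOf (m - 1) then 0 else 1 := by
  rw [numActive, numActive, length_insertIdx_of_le_length hs]
  exact count_active_insertIdx_of_ge hs hn hm hm1 hb (by omega)

theorem idxOf_insertIdx_pred_eq_iff (hs : s ≤ p.length) (hn : p.Nodup) (hm : m ∉ p)
    (hsA : Active p s) {a : ℕ} (ha : a ∈ p) (ha1 : a - 1 ∈ p) (ha0 : 1 ≤ a) :
    (p.insertIdx s m).idxOf (a - 1) = (p.insertIdx s m).idxOf a + 1 ↔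
      p.idxOf (a - 1) = p.idxOf a + 1 := by
  rw [idxOf_insertIdx_of_mem hs hn hm ha, idxOf_insertIdx_of_mem hs hn hm ha1]
  have hlt := idxOf_lt_length_iff.2 ha1
  have hval := getD_idxOf ha 0
  have hval1 := getD_idxOf ha1 0
  have hne : p.idxOf (a - 1) ≠ p.idxOf a := fun h => by rw [h] at hval1; omega
  split_ifs with h1 h2 h2
  · rfl
  · constructor <;> intro h <;> omega
  · constructor
    · intro h; omega
    · intro h
      refine absurd ⟨p.idxOf (a - 1), hlt, by omega, by omega, ?_⟩ hsA
      rw [show s - 1 = p.idxOf a by omega]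
      omega
  · constructor <;> intro h <;> omega

end Insertion

noncomputable def encode (x : List ℕ) : List ℕ :=
  x.foldl (fun p v => p.insertIdx (Nat.nth (Active p) v) p.length) []

theorem encode_append_singleton (x : List ℕ) (v : ℕ) :
    encode (x ++ [v]) = (encode x).insertIdx (Nat.nth (Active (encode x)) v) (encode x).length :=
  foldl_concat _ _ _ _

theorem encode_singleton_zero : encode [0] = [0] := by
  rw [← nil_append [0], encode_append_singleton, Nat.nth_zero_of_zero (by decide)]
  rfl

def PlateausMatch (x p : List ℕ) : Prop :=
  ∀ a, 1 ≤ a → a < x.length →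
    (p.idxOf (a - 1) = p.idxOf a + 1 ↔ x.getD a 0 = x.getD (a - 1) 0)

structure Encodes (x p : List ℕ) : Prop where
  perm : p ~ range x.length
  not_hasRPattern : ¬ HasRPattern p
  numActive_eq : numActive p = ascList x + 2
  active_idxOf_max : Active p (p.idxOf (x.length - 1))
  count_idxOf_max : Nat.count (Active p) (p.idxOf (x.length - 1)) = x.getD (x.length - 1) 0
  plateausMatch : PlateausMatch x p

theorem encodes_singleton_zero : Encodes [0] [0] where
  perm := Perm.refl _
  not_hasRPattern := fun ⟨_, _, hk, hik, _⟩ => by simp at hk; omega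
  numActive_eq := by decide
  active_idxOf_max := by decide
  count_idxOf_max := by decide
  plateausMatch := fun a h1 h2 => by simp at h2; omega

namespace Encodes

variable {x p : List ℕ} {v : ℕ}

theorem length_eq (h : Encodes x p) : p.length = x.length := by
  simpa using h.perm.length_eq

theorem nodup (h : Encodes x p) : p.Nodup := h.perm.nodup_iff.2 nodup_range

theorem nth_active_le_length (h : Encodes x p) (hv : v ≤ 1 + ascList x) :
    Nat.nth (Active p) v ≤ p.length :=
  Nat.lt_succ_iff.1 <| Nat.nth_lt_of_lt_count <| by
    rw [← numActive, h.numActive_eq]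
    omega

theorem nth_active_last (h : Encodes x p) :
    Nat.nth (Active p) (x.getD (x.length - 1) 0) = p.idxOf (x.length - 1) := by
  rw [← h.count_idxOf_max, Nat.nth_count h.active_idxOf_max]

theorem idxOf_max_lt_nth_iff (h : Encodes x p) :
    p.idxOf (x.length - 1) < Nat.nth (Active p) v ↔ x.getD (x.length - 1) 0 < v := by
  rw [← h.nth_active_last]
  exact Nat.nth_lt_nth (infinite_setOf_active p)

theorem nth_eq_idxOf_max_iff (h : Encodes x p) :
    Nat.nth (Active p) v = p.idxOf (x.length - 1) ↔ v = x.getD (x.length - 1) 0 := by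
  rw [← h.nth_active_last]
  exact (Nat.nth_injective (infinite_setOf_active p)).eq_iff

theorem mem_iff (h : Encodes x p) {a : ℕ} : a ∈ p ↔ a < x.length := mem_of_perm_range h.perm

theorem plateausMatch_append_singleton (h : Encodes x p) (hx : x ≠ [])
    (hv : v ≤ 1 + ascList x) :
    PlateausMatch (x ++ [v]) (p.insertIdx (Nat.nth (Active p) v) x.length) := by
  have hs := h.nth_active_le_length hv
  have hmp : x.length ∉ p := fun hm => lt_irrefl _ (h.mem_iff.1 hm)
  have hmp1 : x.length - 1 ∈ p := h.mem_iff.2 (by have := length_pos_iff.2 hx; omega)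
  have hlt := h.idxOf_max_lt_nth_iff (v := v)
  have heq := h.nth_eq_idxOf_max_iff (v := v)
  intro a ha1 ha2
  rw [length_append, length_singleton] at ha2
  rw [getD_append_singleton, getD_append_singleton]
  rcases Nat.lt_or_ge a x.length with ham | ham
  · rw [if_pos ham, if_pos (by omega), ← h.plateausMatch a ha1 ham]
    exact idxOf_insertIdx_pred_eq_iff hs h.nodup hmp
      (Nat.nth_mem_of_infinite (infinite_setOf_active p) v) (h.mem_iff.2 ham)
      (h.mem_iff.2 (by omega)) ha1
  · obtain rfl : a = x.length := by omega
    rw [if_neg (lt_irrefl _), if_pos rfl, if_pos (by omega), idxOf_insertIdx_self hs h.nodup hmp,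
      idxOf_insertIdx_of_mem hs h.nodup hmp hmp1]
    split_ifs <;> constructor <;> intro <;> omega

theorem append_singleton (h : Encodes x p) (hx : x ≠ []) (hv : v ≤ 1 + ascList x) :
    Encodes (x ++ [v]) (p.insertIdx (Nat.nth (Active p) v) x.length) := by
  have hs := h.nth_active_le_length hv
  have hsA : Active p (Nat.nth (Active p) v) := Nat.nth_mem_of_infinite (infinite_setOf_active p) v
  have hb : ∀ b ∈ p, b < x.length := fun b => h.mem_iff.1
  have hmp : x.length ∉ p := fun hm => lt_irrefl _ (hb _ hm)
  have hidx := idxOf_insertIdx_self hs h.nodup hmp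
  have hlast : (x ++ [v]).length - 1 = x.length := by simp
  refine ⟨?_, ?_, ?_, ?_, ?_, h.plateausMatch_append_singleton hx hv⟩
  · rw [length_append, length_singleton]
    exact insertIdx_perm_range h.perm hs
  · rw [hasRPattern_insertIdx_iff hs hb]
    exact not_or.2 ⟨hsA, h.not_hasRPattern⟩
  · have := h.idxOf_max_lt_nth_iff (v := v)
    rw [numActive_insertIdx hs h.nodup (h.mem_iff.2 (by have := length_pos_iff.2 hx; omega))
      (length_pos_iff.2 hx) hb, h.numActive_eq, ascList_append_singleton hx]
    split_ifs <;> omega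
  · rw [hlast, hidx]
    exact (not_congr (blocked_insertIdx_of_le hs hb le_rfl)).2 hsA
  · rw [hlast, hidx, count_active_insertIdx_of_le hs hb (by omega), getD_append_singleton,
      if_neg (lt_irrefl _), if_pos rfl]
    exact Nat.count_nth_of_infinite (infinite_setOf_active p) v

end Encodes

theorem encodes_encode {x : List ℕ} (hx : IsAscentSeq x) (hne : x ≠ []) :
    Encodes x (encode x) := by
  induction x using List.reverseRecOn with
  | nil => exact absurd rfl hne
  | append_singleton y v ih =>
    rcases eq_or_ne y [] with rfl | hy
    · obtain rfl : v = 0 := by simpa [IsAscentSeq] using hx.1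
      rw [nil_append, encode_singleton_zero]
      exact encodes_singleton_zero
    · obtain ⟨hy', hv⟩ := (isAscentSeq_append_singleton hy v).1 hx
      have h := ih hy' hy
      rw [encode_append_singleton, h.length_eq]
      exact h.append_singleton hy hv

theorem eq_of_encode_eq {x y : List ℕ} (hx : IsAscentSeq x) (hy : IsAscentSeq y)
    (hl : x.length = y.length) (h : encode x = encode y) : x = y := by
  induction x using List.reverseRecOn generalizing y with
  | nil => exact (length_eq_zero_iff.1 hl.symm).symm
  | append_singleton x v ih =>
    obtain rfl | ⟨y, w, rfl⟩ := eq_nil_or_concat y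
    · simp at hl
    rw [concat_eq_append] at hy hl h ⊢
    simp only [length_append, length_singleton, Nat.add_right_cancel_iff] at hl
    rcases eq_or_ne x [] with rfl | hx'
    · obtain rfl := length_eq_zero_iff.1 hl.symm
      simp only [nil_append, IsAscentSeq] at hx hy
      simp_all
    have hy' : y ≠ [] := fun h => hx' (length_eq_zero_iff.1 (hl.trans (by rw [h]; rfl)))
    obtain ⟨hxa, hv⟩ := (isAscentSeq_append_singleton hx' v).1 hx
    obtain ⟨hya, hw⟩ := (isAscentSeq_append_singleton hy' w).1 hy
    have ex := encodes_encode hxa hx'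
    have ey := encodes_encode hya hy'
    rw [encode_append_singleton, encode_append_singleton, ex.length_eq, ey.length_eq, ← hl] at h
    obtain ⟨hs, he⟩ := eq_of_insertIdx_eq (ex.nth_active_le_length hv)
      (ey.nth_active_le_length hw)
      ex.nodup ey.nodup (fun hm => (lt_irrefl _) ((mem_of_perm_range ex.perm).1 hm))
      (fun hm => (lt_irrefl _) (hl ▸ (mem_of_perm_range ey.perm).1 hm)) h
    rw [he] at hs
    rw [ih hxa hya hl he, (Nat.nth_injective (infinite_setOf_active _)) hs]

theorem exists_encode_eq {n : ℕ} {p : List ℕ} (hp : p ~ range n) (hR : ¬ HasRPattern p) :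
    ∃ x, x.length = n ∧ IsAscentSeq x ∧ encode x = p := by
  induction n generalizing p with
  | zero =>
    exact ⟨[], rfl, ⟨rfl, fun _ _ h => absurd h (Nat.not_lt_zero _)⟩, (perm_nil.1 hp).symm⟩
  | succ n ih =>
    obtain ⟨q, s, hs, hq, rfl⟩ := exists_insertIdx_eq_of_perm_range_succ hp
    have hqn : q.length = n := by simpa using hq.length_eq
    rw [hasRPattern_insertIdx_iff hs fun b hb => (mem_of_perm_range hq).1 hb, not_or] at hR
    obtain ⟨hsA, hqR⟩ := hR
    obtain ⟨y, hyn, hy, rfl⟩ := ih hq hqR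
    have hsv : Nat.nth (Active (encode y)) (Nat.count (Active (encode y)) s) = s :=
      Nat.nth_count hsA
    refine ⟨y ++ [Nat.count (Active (encode y)) s], by simp [hyn], ?_, ?_⟩
    · rcases eq_or_ne y [] with rfl | hy'
      · obtain rfl : s = 0 := Nat.le_zero.1 hs
        exact ⟨rfl, fun i hi hi' => by simp at hi'; omega⟩
      · refine (isAscentSeq_append_singleton hy' _).2 ⟨hy, ?_⟩
        have := Nat.count_strict_mono (p := Active (encode y)) (n := (encode y).length + 1) hsA
          (by omega)
        rw [← numActive, (encodes_encode hy hy').numActive_eq] at this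
        omega
    · rw [encode_append_singleton, hsv, hqn]

def HasDescRun (k : ℕ) (p : List ℕ) : Prop :=
  ∃ i, i + k < p.length ∧ ∀ j ≤ k, p.getD (i + j) 0 = p.getD i 0 - j

section Runs

variable {x p : List ℕ}

theorem hasDescRun_of_run (hp : p ~ range x.length) (hadj : PlateausMatch x p) {k i : ℕ}
    (hik : i + k < x.length)
    (hrun : ∀ j ≤ k, x.getD (i + j) 0 = x.getD i 0) : HasDescRun k p := by
  have hmem : ∀ j ≤ k, i + k - j ∈ p := fun j _ => (mem_of_perm_range hp).2 (by omega)
  have hchain : ∀ j ≤ k, p.idxOf (i + k - j) = p.idxOf (i + k) + j := by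
    intro j
    induction j with
    | zero => intro _; rfl
    | succ j ih =>
      intro hj
      have hx : x.getD (i + k - j) 0 = x.getD (i + k - j - 1) 0 := by
        rw [show i + k - j = i + (k - j) by omega, show i + (k - j) - 1 = i + (k - j - 1) by omega,
          hrun _ (by omega), hrun _ (by omega)]
      rw [show i + k - (j + 1) = i + k - j - 1 by omega,
        (hadj (i + k - j) (by omega) (by omega)).2 hx, ih (by omega)]
      rfl
  have hval : ∀ j ≤ k, p.getD (p.idxOf (i + k) + j) 0 = i + k - j := fun j hj => by
    rw [← hchain j hj, getD_idxOf (hmem j hj)]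
  refine ⟨p.idxOf (i + k), ?_, fun j hj => ?_⟩
  · rw [← hchain k le_rfl]
    exact idxOf_lt_length_iff.2 (hmem k le_rfl)
  · have h0 := hval 0 (Nat.zero_le k)
    rw [add_zero] at h0
    rw [hval j hj, h0, Nat.sub_zero]

theorem run_of_hasDescRun (hp : p ~ range x.length) (hadj : PlateausMatch x p) {k : ℕ}
    (h : HasDescRun k p) :
    ∃ i, i + k < x.length ∧ ∀ j ≤ k, x.getD (i + j) 0 = x.getD i 0 := by
  obtain ⟨i, hik, hval⟩ := h
  have hlen : p.length = x.length := by simpa using hp.length_eq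
  have hn : p.Nodup := hp.nodup_iff.2 nodup_range
  set b := p.getD i 0
  have hb : b < x.length := (mem_of_perm_range hp).1 (getD_mem_of_lt 0 (by omega))
  have hkb : k ≤ b := by
    by_contra hkb
    have h0 : p.getD (i + b) 0 = p.getD (i + (b + 1)) 0 := by
      rw [hval b (by omega), hval (b + 1) (by omega)]
      omega
    have := congrArg p.idxOf h0
    rw [hn.idxOf_getD (by omega), hn.idxOf_getD (by omega)] at this
    omega
  have hidx : ∀ j ≤ k, p.idxOf (b - j) = i + j := fun j hj => by
    rw [← hval j hj, hn.idxOf_getD (by omega)]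
  have hstep : ∀ j < k, x.getD (b - k + j + 1) 0 = x.getD (b - k + j) 0 := fun j hj => by
    have := hadj (b - k + j + 1) (by omega) (by omega)
    rw [Nat.add_sub_cancel, show b - k + j + 1 = b - (k - j - 1) by omega,
      show b - k + j = b - (k - j) by omega, hidx _ (by omega), hidx _ (by omega)] at this
    rw [show b - k + j + 1 = b - (k - j - 1) by omega, show b - k + j = b - (k - j) by omega]
    exact this.1 (by omega)
  refine ⟨b - k, by omega, fun j hj => ?_⟩
  induction j with
  | zero => rfl
  | succ j ih => rw [← add_assoc, hstep j hj, ih (by omega)]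

theorem runsAtMost_iff_not_hasDescRun (hp : p ~ range x.length) (hadj : PlateausMatch x p)
    (k : ℕ) : RunsAtMost k x ↔ ¬ HasDescRun k p :=
  not_congr ⟨fun ⟨_, hik, hrun⟩ => hasDescRun_of_run hp hadj hik hrun,
    run_of_hasDescRun hp hadj⟩

end Runs

theorem encode_spec {x : List ℕ} (hx : IsAscentSeq x) :
    encode x ~ range x.length ∧ ¬ HasRPattern (encode x) ∧
      ∀ k, RunsAtMost k x ↔ ¬ HasDescRun k (encode x) := by
  rcases eq_or_ne x [] with rfl | hne
  · refine ⟨Perm.refl _, fun ⟨_, _, hk, _⟩ => absurd hk (Nat.not_lt_zero _), fun k => ?_⟩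
    exact runsAtMost_iff_not_hasDescRun (Perm.refl _)
      (fun _ _ ha => absurd ha (Nat.not_lt_zero _)) k
  · have h := encodes_encode hx hne
    exact ⟨h.perm, h.not_hasRPattern, runsAtMost_iff_not_hasDescRun h.perm h.plateausMatch⟩

theorem card_ascentSeq_eq_card_words (n k : ℕ) :
    Nat.card {x : List ℕ // x.length = n ∧ IsAscentSeq x ∧ RunsAtMost k x} =
      Nat.card {p : List ℕ // p ~ range n ∧ ¬ HasRPattern p ∧ ¬ HasDescRun k p} := by
  refine Nat.card_eq_of_bijective (fun x => ⟨encode x.1, ?_⟩) ⟨?_, ?_⟩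
  · obtain ⟨hn, hx, hrun⟩ := x.2
    obtain ⟨hp, hR, hk⟩ := encode_spec hx
    rw [hn] at hp
    exact ⟨hp, hR, (hk k).1 hrun⟩
  · intro x y hxy
    exact Subtype.ext (eq_of_encode_eq x.2.2.1 y.2.2.1 (x.2.1.trans y.2.1.symm)
      (congrArg Subtype.val hxy))
  · rintro ⟨p, hp, hR, hk⟩
    obtain ⟨x, rfl, hx, rfl⟩ := exists_encode_eq hp hR
    exact ⟨⟨x, rfl, hx, ((encode_spec hx).2.2 k).2 hk⟩, rfl⟩

section OneLine

variable {n : ℕ}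

def oneLine (π : Equiv.Perm (Fin n)) : List ℕ := ofFn fun i => (π i : ℕ)

theorem length_oneLine (π : Equiv.Perm (Fin n)) : (oneLine π).length = n := length_ofFn

theorem getD_oneLine (π : Equiv.Perm (Fin n)) (i : Fin n) : (oneLine π).getD i 0 = π i := by
  simp [oneLine, getD_eq_getElem?_getD]

theorem oneLine_perm_range (π : Equiv.Perm (Fin n)) : oneLine π ~ range n := by
  refine (perm_ext_iff_of_nodup ?_ nodup_range).2 fun a => ?_
  · exact nodup_ofFn.2 (Fin.val_injective.comp π.injective)
  · rw [oneLine, mem_ofFn, mem_range]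
    exact ⟨fun ⟨i, hi⟩ => hi ▸ (π i).2, fun ha => ⟨π.symm ⟨a, ha⟩, by simp⟩⟩

theorem exists_oneLine_eq {p : List ℕ} (hp : p ~ range n) :
    ∃ π : Equiv.Perm (Fin n), oneLine π = p := by
  have hlen : p.length = n := by simpa using hp.length_eq
  have hn : p.Nodup := hp.nodup_iff.2 nodup_range
  let f : Fin n → Fin n := fun i =>
    ⟨p.getD i 0, (mem_of_perm_range hp).1 (getD_mem_of_lt 0 (by omega))⟩
  have hf : f.Injective := fun i j hij => by
    have := congrArg p.idxOf (congrArg Fin.val hij)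
    rwa [hn.idxOf_getD (by omega), hn.idxOf_getD (by omega), Fin.val_inj] at this
  refine ⟨Equiv.ofBijective f (Finite.injective_iff_bijective.1 hf),
    ext_getElem ?_ fun i h1 h2 => ?_⟩
  · rw [length_oneLine, hlen]
  · rw [← getD_eq_getElem _ 0, ← getD_eq_getElem _ 0]
    exact getD_oneLine _ ⟨i, by rwa [length_oneLine] at h1⟩

theorem inRset_iff_not_hasRPattern (π : Equiv.Perm (Fin n)) :
    InRset π ↔ ¬ HasRPattern (oneLine π) := by
  refine not_congr
    ⟨fun ⟨i, j, k, hj, hik, h1, h2, h3⟩ => ?_, fun ⟨i, k, hk, hik, h1, h2⟩ => ?_⟩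
  · refine ⟨i, k, by rw [length_oneLine]; exact k.2, hik, ?_, ?_⟩
    · rw [getD_oneLine, getD_oneLine]
      omega
    · rw [getD_oneLine, ← hj, getD_oneLine]
      exact h2
  · rw [length_oneLine] at hk
    refine ⟨⟨i, by omega⟩, ⟨i + 1, by omega⟩, ⟨k, hk⟩, rfl, hik, ?_⟩
    have e1 := getD_oneLine π ⟨i, by omega⟩
    have e2 := getD_oneLine π ⟨i + 1, by omega⟩
    have e3 := getD_oneLine π ⟨k, hk⟩
    simp only at e1 e2 e3
    omega

theorem noDescRun_iff_not_hasDescRun (k : ℕ) (π : Equiv.Perm (Fin n)) :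
    NoDescRun k π ↔ ¬ HasDescRun k (oneLine π) := by
  refine not_congr ⟨fun ⟨i, hik, h⟩ => ⟨i, by rwa [length_oneLine], fun j hj => ?_⟩,
    fun ⟨i, hik, h⟩ => ⟨i, by rwa [length_oneLine] at hik, fun j hj => ?_⟩⟩
  · have e1 := getD_oneLine π ⟨i + j, by omega⟩
    have e2 := getD_oneLine π ⟨i, by omega⟩
    simp only at e1 e2
    rw [e1, e2, h j hj]
  · rw [length_oneLine] at hik
    have e1 := getD_oneLine π ⟨i + j, by omega⟩
    have e2 := getD_oneLine π ⟨i, by omega⟩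
    simp only at e1 e2
    rw [← e1, ← e2, h j hj]

end OneLine

theorem card_perm_eq_card_words (n k : ℕ) :
    Nat.card {π : Equiv.Perm (Fin n) // InRset π ∧ NoDescRun k π} =
      Nat.card {p : List ℕ // p ~ range n ∧ ¬ HasRPattern p ∧ ¬ HasDescRun k p} := by
  refine Nat.card_eq_of_bijective (fun π => ⟨oneLine π.1, oneLine_perm_range π.1,
    (inRset_iff_not_hasRPattern π.1).1 π.2.1, (noDescRun_iff_not_hasDescRun k π.1).1 π.2.2⟩)
    ⟨fun π σ h => ?_, fun ⟨p, hp, hR, hk⟩ => ?_⟩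
  · exact Subtype.ext (Equiv.ext fun i => Fin.ext (by
      rw [← getD_oneLine, ← getD_oneLine]; exact congrArg (·.1.getD i 0) h))
  · obtain ⟨π, rfl⟩ := exists_oneLine_eq hp
    exact ⟨⟨π, (inRset_iff_not_hasRPattern π).2 hR,
      (noDescRun_iff_not_hasDescRun k π).2 hk⟩, rfl⟩

end AscentBij

theorem stmt_14_general (n k : ℕ) :
    Nat.card {l : List ℕ // l.length = n ∧ IsAscentSeq l ∧ RunsAtMost k l} =
      Nat.card {π : Equiv.Perm (Fin n) // InRset π ∧ NoDescRun k π} :=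
  (AscentBij.card_ascentSeq_eq_card_words n k).trans (AscentBij.card_perm_eq_card_words n k).symm

/-- `|A_n^(k)| = |R_n^(k)|`. -/
theorem stmt_14 (n k : ℕ) (hk : 1 ≤ k) :
    Nat.card {l : List ℕ // l.length = n ∧ IsAscentSeq l ∧ RunsAtMost k l} =
      Nat.card {π : Equiv.Perm (Fin n) // InRset π ∧ NoDescRun k π} :=
  stmt_14_general n k
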